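/- Let δ ∈ (1/2, 1) and G_δ(x) = H(δ) + δ·H(x) − (1 − xδ)·log 2. Then G_δ(2/3) > 0, G_δ(1) > 0, and G_δ(2 − 1/δ) > 0, while G_δ(0) = H(δ) − log 2 < 0. -/
import Mathlib


/-- Binary entropy with natural logarithms (note `Real.log 0 = 0` in Mathlib,
so the convention `0·log 0 = 0` is automatic). -/
noncomputable def binEnt (x : ℝ) : ℝ := -x * Real.log x - (1 - x) * Real.log (1 - x)

/-- `G(δ,x) = H(δ) + δ·H(x) − (1 − xδ)·log 2`. -/
noncomputable def Gfun (δ x : ℝ) : ℝ := binEnt δ + δ * binEnt x - (1 - x * δ) * Real.log 2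

lemma binEnt_eq (x : ℝ) : binEnt x = Real.binEntropy x := by
  unfold binEnt Real.binEntropy
  rw [Real.log_inv, Real.log_inv]; ring

lemma binEnt_pos {x : ℝ} (h0 : 0 < x) (h1 : x < 1) : 0 < binEnt x := by
  rw [binEnt_eq]; exact Real.binEntropy_pos h0 h1

lemma binEnt_key {δ : ℝ} (hδ1 : 1 / 2 < δ) (hδ2 : δ < 1) :
    (1 - δ) * Real.log 2 < binEnt δ := by
  have h0 : 0 < δ := by linarith
  have hlogδ : Real.log δ < 0 := Real.log_neg h0 hδ2
  have h1 : Real.log (1 - δ) ≤ Real.log (1 / 2) := by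
    apply Real.log_le_log (by linarith) (by linarith)
  rw [Real.log_div one_ne_zero two_ne_zero, Real.log_one] at h1
  have h2 : 0 < -δ * Real.log δ := by nlinarith
  unfold binEnt
  nlinarith [h1, h2]

theorem Gfun_values (δ : ℝ) (hδ1 : 1 / 2 < δ) (hδ2 : δ < 1) :
    Gfun δ (2 / 3) > 0 ∧ Gfun δ 1 > 0 ∧ Gfun δ (2 - 1 / δ) > 0 ∧
      Gfun δ 0 = binEnt δ - Real.log 2 ∧ Gfun δ 0 < 0 := by
  have h0 : 0 < δ := by linarith
  have hne : δ ≠ 0 := ne_of_gt h0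
  have hkey := binEnt_key hδ1 hδ2
  have hl2 : (0:ℝ) < Real.log 2 := Real.log_pos (by norm_num)
  have hl23 : Real.log 2 < Real.log 3 := Real.log_lt_log (by norm_num) (by norm_num)
  refine ⟨?_, ?_, ?_, ?_, ?_⟩
  · -- Gfun δ (2/3) > 0
    have hb : binEnt (2/3) = Real.log 3 - (2/3) * Real.log 2 := by
      unfold binEnt
      have : (1:ℝ) - 2/3 = 1/3 := by norm_num
      rw [this, show (2:ℝ)/3 = 2/3 from rfl,
        Real.log_div two_ne_zero (by norm_num : (3:ℝ) ≠ 0),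
        Real.log_div one_ne_zero (by norm_num : (3:ℝ) ≠ 0), Real.log_one]
      ring
    unfold Gfun
    rw [hb]
    nlinarith
  · -- Gfun δ 1 > 0
    have hb : binEnt 1 = 0 := by simp [binEnt]
    unfold Gfun
    rw [hb]
    nlinarith
  · -- Gfun δ (2 - 1/δ) > 0
    have ha : (0:ℝ) < 2*δ - 1 := by linarith
    have hb : (0:ℝ) < 1 - δ := by linarith
    have hx : (2:ℝ) - 1/δ = (2*δ-1)/δ := by field_simp
    have hx' : (1:ℝ) - (2 - 1/δ) = (1-δ)/δ := by field_simp; ring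
    have key : Gfun δ (2 - 1/δ) = binEnt (2*δ - 1) := by
      unfold Gfun binEnt
      rw [hx', hx, Real.log_div (ne_of_gt ha) hne, Real.log_div (ne_of_gt hb) hne]
      have h1 : (1:ℝ) - (2*δ - 1) = 2*(1-δ) := by ring
      rw [h1, Real.log_mul two_ne_zero (ne_of_gt hb)]
      field_simp
      ring
    rw [key]
    exact binEnt_pos (by linarith) (by linarith)
  · simp [Gfun, binEnt]
  · have : binEnt δ < Real.log 2 := by
      rw [binEnt_eq]
      exact Real.binEntropy_lt_log_two.2 (by rw [show (2:ℝ)⁻¹ = 1/2 by norm_num]; linarith)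
    simp only [Gfun, binEnt]
    simp [binEnt] at this ⊢
    linarith [this]
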